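/- Let G be a complete PE-CFG without ε expressions that is LL(1). Then the language of G interpreted as a CFG equals its language interpreted as a PEG: { x | ∃y, G xy ⤳CFG y } = { x | ∃y, G xy ⤳PEG y }. -/

import Mathlib

/-- Parsing expressions over non-terminals `V` and terminals `T`. -/
inductive PExp (V T : Type) : Type where
  | eps : PExp V T
  | term : T → PExp V T
  | var : V → PExp V T
  | cat : PExp V T → PExp V T → PExp V T
  | alt : PExp V T → PExp V T → PExp V T

/-- The relation `G[p] v ⤳CFG w`, where the PE-CFG is given by its production
function `P` (the initial expression is the first explicit argument). -/
inductive CFGMatch {V T : Type} (P : V → PExp V T) : PExp V T → List T → List T → Prop where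
  | empty (x : List T) : CFGMatch P .eps x x
  | term (a : T) (x : List T) : CFGMatch P (.term a) (a :: x) x
  | var {A : V} {v w : List T} : CFGMatch P (P A) v w → CFGMatch P (.var A) v w
  | cat {p₁ p₂ : PExp V T} {v u w : List T} :
      CFGMatch P p₁ v u → CFGMatch P p₂ u w → CFGMatch P (.cat p₁ p₂) v w
  | altL {p₁ p₂ : PExp V T} {v w : List T} :
      CFGMatch P p₁ v w → CFGMatch P (.alt p₁ p₂) v w
  | altR {p₁ p₂ : PExp V T} {v w : List T} :
      CFGMatch P p₂ v w → CFGMatch P (.alt p₁ p₂) v w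

/-- Result of a PEG match: either the remaining suffix of the input, or failure. -/
inductive Res (T : Type) : Type where
  | str : List T → Res T
  | fail : Res T

/-- The relation `G[p] x ⤳PEG X` (ordered choice, explicit failure). -/
inductive PEGMatch {V T : Type} (P : V → PExp V T) : PExp V T → List T → Res T → Prop where
  | empty (x : List T) : PEGMatch P .eps x (.str x)
  | termS (a : T) (x : List T) : PEGMatch P (.term a) (a :: x) (.str x)
  | termF {b a : T} (x : List T) : b ≠ a → PEGMatch P (.term b) (a :: x) .fail
  | termE (a : T) : PEGMatch P (.term a) [] .fail
  | var {A : V} {x : List T} {r : Res T} : PEGMatch P (P A) x r → PEGMatch P (.var A) x r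
  | catS {p₁ p₂ : PExp V T} {v u : List T} {r : Res T} :
      PEGMatch P p₁ v (.str u) → PEGMatch P p₂ u r → PEGMatch P (.cat p₁ p₂) v r
  | catF {p₁ p₂ : PExp V T} {v : List T} :
      PEGMatch P p₁ v .fail → PEGMatch P (.cat p₁ p₂) v .fail
  | ordS {p₁ p₂ : PExp V T} {v w : List T} :
      PEGMatch P p₁ v (.str w) → PEGMatch P (.alt p₁ p₂) v (.str w)
  | ordB {p₁ p₂ : PExp V T} {v w : List T} :
      PEGMatch P p₁ v .fail → PEGMatch P p₂ v (.str w) → PEGMatch P (.alt p₁ p₂) v (.str w)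
  | ordF {p₁ p₂ : PExp V T} {v : List T} :
      PEGMatch P p₁ v .fail → PEGMatch P p₂ v .fail → PEGMatch P (.alt p₁ p₂) v .fail

/-- `Subterm q p`: the expression `q` is a subexpression of `p`. -/
inductive Subterm {V T : Type} : PExp V T → PExp V T → Prop where
  | refl (p : PExp V T) : Subterm p p
  | catL {q p₁ p₂ : PExp V T} : Subterm q p₁ → Subterm q (.cat p₁ p₂)
  | catR {q p₁ p₂ : PExp V T} : Subterm q p₂ → Subterm q (.cat p₁ p₂)
  | altL {q p₁ p₂ : PExp V T} : Subterm q p₁ → Subterm q (.alt p₁ p₂)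
  | altR {q p₁ p₂ : PExp V T} : Subterm q p₂ → Subterm q (.alt p₁ p₂)

/-- `q` occurs in the grammar `(P, pS)`: it is a subexpression of the initial
expression `pS` or of some production `P A`. -/
def OccursIn {V T : Type} (P : V → PExp V T) (pS : PExp V T) (q : PExp V T) : Prop :=
  Subterm q pS ∨ ∃ A : V, Subterm q (P A)

/-- `FIRST^G(p)`: the terminals that can start a string matched by `G[p]`. -/
def FIRST {V T : Type} (P : V → PExp V T) (p : PExp V T) : Set T :=
  {a : T | ∃ x y : List T, CFGMatch P p (a :: (x ++ y)) y}

/-- The grammar `(P, pS)` has no `ε` expressions. -/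
def NoEps {V T : Type} (P : V → PExp V T) (pS : PExp V T) : Prop :=
  ¬ OccursIn P pS PExp.eps

/-- The grammar `(P, pS)` (without `ε` expressions) is LL(1): the `FIRST` sets
of the two alternatives of every choice occurring in the grammar are disjoint. -/
def IsLL1 {V T : Type} (P : V → PExp V T) (pS : PExp V T) : Prop :=
  ∀ q₁ q₂ : PExp V T, OccursIn P pS (.alt q₁ q₂) → FIRST P q₁ ∩ FIRST P q₂ = ∅

/-- The grammar `(P, pS)` is complete: every expression occurring in it either
succeeds or fails (as a PEG) on every input. -/
def Complete {V T : Type} (P : V → PExp V T) (pS : PExp V T) : Prop :=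
  ∀ p : PExp V T, OccursIn P pS p → ∀ x : List T,
    (∃ x' : List T, PEGMatch P p x (.str x')) ∨ PEGMatch P p x .fail

/-!
Every successful PEG derivation is a CFG derivation, since each PEG rule with a successful
result is an instance of a CFG rule. Conversely, a CFG derivation is replayed as a PEG
derivation; the only rule without a PEG counterpart is choosing the right alternative of
`p₁ | p₂` while `p₁` may succeed. Completeness says `p₁` either succeeds or fails; if it
succeeded, both alternatives would consume a nonempty prefix of the same input (there are no
`ε` expressions), so its first terminal would lie in `FIRST p₁ ∩ FIRST p₂`, against LL(1).
-/

theorem Subterm.trans {V T : Type} {q p r : PExp V T} (hqp : Subterm q p)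
    (hpr : Subterm p r) : Subterm q r := by
  induction hpr with
  | refl => exact hqp
  | catL _ ih => exact .catL ih
  | catR _ ih => exact .catR ih
  | altL _ ih => exact .altL ih
  | altR _ ih => exact .altR ih

namespace OccursIn

variable {V T : Type} {P : V → PExp V T} {pS : PExp V T}

theorem of_subterm {p q : PExp V T} (h : OccursIn P pS p) (hqp : Subterm q p) :
    OccursIn P pS q := by
  rcases h with h | ⟨A, h⟩
  · exact .inl (hqp.trans h)
  · exact .inr ⟨A, hqp.trans h⟩

theorem catL {p₁ p₂ : PExp V T} (h : OccursIn P pS (.cat p₁ p₂)) : OccursIn P pS p₁ :=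
  h.of_subterm (.catL (.refl _))

theorem catR {p₁ p₂ : PExp V T} (h : OccursIn P pS (.cat p₁ p₂)) : OccursIn P pS p₂ :=
  h.of_subterm (.catR (.refl _))

theorem altL {p₁ p₂ : PExp V T} (h : OccursIn P pS (.alt p₁ p₂)) : OccursIn P pS p₁ :=
  h.of_subterm (.altL (.refl _))

theorem altR {p₁ p₂ : PExp V T} (h : OccursIn P pS (.alt p₁ p₂)) : OccursIn P pS p₂ :=
  h.of_subterm (.altR (.refl _))

theorem production (P : V → PExp V T) (pS : PExp V T) (A : V) : OccursIn P pS (P A) :=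
  .inr ⟨A, .refl _⟩

end OccursIn

namespace PEGMatch

variable {V T : Type} {P : V → PExp V T}

theorem toCFGMatch {p : PExp V T} {x y : List T} (h : PEGMatch P p x (.str y)) :
    CFGMatch P p x y := by
  generalize hr : Res.str y = r at h
  induction h generalizing y with
  | empty => cases hr; exact .empty _
  | termS => cases hr; exact .term _ _
  | termF | termE | catF | ordF => cases hr
  | var _ ih => exact .var (ih hr)
  | catS _ _ ih₁ ih₂ => exact .cat (ih₁ rfl) (ih₂ hr)
  | ordS _ ih => exact .altL (ih hr)
  | ordB _ _ _ ih => exact .altR (ih hr)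

end PEGMatch

namespace CFGMatch

variable {V T : Type} {P : V → PExp V T} {pS : PExp V T}

theorem exists_eq_append {p : PExp V T} {v w : List T} (h : CFGMatch P p v w) :
    ∃ u, v = u ++ w := by
  induction h with
  | empty => exact ⟨[], rfl⟩
  | term a => exact ⟨[a], rfl⟩
  | var _ ih | altL _ ih | altR _ ih => exact ih
  | cat _ _ ih₁ ih₂ =>
      obtain ⟨u₁, rfl⟩ := ih₁
      obtain ⟨u₂, rfl⟩ := ih₂
      exact ⟨u₁ ++ u₂, (List.append_assoc _ _ _).symm⟩

theorem exists_eq_cons_append (hnoeps : NoEps P pS) {p : PExp V T} {v w : List T}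
    (h : CFGMatch P p v w) (hocc : OccursIn P pS p) : ∃ a u, v = a :: (u ++ w) := by
  induction h with
  | empty => exact absurd hocc hnoeps
  | term a => exact ⟨a, [], rfl⟩
  | @var A _ _ _ ih => exact ih (.production P pS A)
  | cat _ h₂ ih₁ _ =>
      obtain ⟨a, u₁, rfl⟩ := ih₁ hocc.catL
      obtain ⟨u₂, rfl⟩ := h₂.exists_eq_append
      exact ⟨a, u₁ ++ u₂, by simp⟩
  | altL _ ih => exact ih hocc.altL
  | altR _ ih => exact ih hocc.altR

theorem exists_head_mem_FIRST (hnoeps : NoEps P pS) {p : PExp V T} {v w : List T}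
    (h : CFGMatch P p v w) (hocc : OccursIn P pS p) :
    ∃ a t, v = a :: t ∧ a ∈ FIRST P p := by
  obtain ⟨a, u, rfl⟩ := h.exists_eq_cons_append hnoeps hocc
  exact ⟨a, _, rfl, u, w, h⟩

theorem not_pegMatch_str_of_altR (hnoeps : NoEps P pS) (hll1 : IsLL1 P pS)
    {p₁ p₂ : PExp V T} {v w x : List T} (hocc : OccursIn P pS (.alt p₁ p₂))
    (h₂ : CFGMatch P p₂ v w) : ¬ PEGMatch P p₁ v (.str x) := by
  intro h₁
  obtain ⟨a, t, rfl, ha₁⟩ := h₁.toCFGMatch.exists_head_mem_FIRST hnoeps hocc.altL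
  obtain ⟨b, _, hb, hb₂⟩ := h₂.exists_head_mem_FIRST hnoeps hocc.altR
  obtain rfl : a = b := (List.cons.inj hb).1
  exact (Set.eq_empty_iff_forall_notMem.1 (hll1 p₁ p₂ hocc) a) ⟨ha₁, hb₂⟩

theorem toPEGMatch (hnoeps : NoEps P pS) (hll1 : IsLL1 P pS) (hcomplete : Complete P pS)
    {p : PExp V T} {v w : List T} (h : CFGMatch P p v w) (hocc : OccursIn P pS p) :
    PEGMatch P p v (.str w) := by
  induction h with
  | empty => exact absurd hocc hnoeps
  | term a x => exact .termS a x
  | @var A _ _ _ ih => exact .var (ih (.production P pS A))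
  | cat _ _ ih₁ ih₂ => exact .catS (ih₁ hocc.catL) (ih₂ hocc.catR)
  | altL _ ih => exact .ordS (ih hocc.altL)
  | @altR p₁ _ v _ h₂ ih =>
      rcases hcomplete p₁ hocc.altL v with ⟨_, hsucc⟩ | hfail
      · exact absurd hsucc (not_pegMatch_str_of_altR hnoeps hll1 hocc h₂)
      · exact .ordB hfail (ih hocc.altR)

end CFGMatch

theorem stmt_8_general {V T : Type}
    (P : V → PExp V T) (pS : PExp V T)
    (hnoeps : NoEps P pS) (hll1 : IsLL1 P pS) (hcomplete : Complete P pS) :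
    {x : List T | ∃ y : List T, CFGMatch P pS (x ++ y) y} =
      {x : List T | ∃ y : List T, PEGMatch P pS (x ++ y) (.str y)} := by
  ext x
  constructor
  · rintro ⟨y, hy⟩
    exact ⟨y, hy.toPEGMatch hnoeps hll1 hcomplete (.inl (.refl _))⟩
  · rintro ⟨y, hy⟩
    exact ⟨y, hy.toCFGMatch⟩

/-- a complete LL(1) PE-CFG without `ε` expressions has the same
language interpreted as a CFG and as a PEG. -/
theorem stmt_8 {V T : Type} [Fintype V] [Fintype T]
    (P : V → PExp V T) (pS : PExp V T)
    (hnoeps : NoEps P pS) (hll1 : IsLL1 P pS) (hcomplete : Complete P pS) :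
    {x : List T | ∃ y : List T, CFGMatch P pS (x ++ y) y} =
      {x : List T | ∃ y : List T, PEGMatch P pS (x ++ y) (.str y)} :=
  stmt_8_general P pS hnoeps hll1 hcomplete
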